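/- arXiv:1701.00385 — 2 statements merged into one kernel-verified Lean document; each statement's English description precedes it below -/
import Mathlib

section
/- For every integer k ≥ 1 and every real x with -1 ≤ x < 1, one has ln(1-x)^k = (-1)^k · k! · Σ_{n=1}^∞ (x^n / n) · ζ_{n-1}({1}_{k-1}), where ζ_{n-1}({1}_{k-1}) = Σ_{n-1 ≥ k_1 > k_2 > ... > k_{k-1} ≥ 1} 1/(k_1 k_2 ⋯ k_{k-1}) is the multiple harmonic number of weight k-1 with all arguments 1 (and ζ_{n-1}(∅) = 1). -/
open Filter Finset

/-- Multiple harmonic number `ζ_n({1}_m)`. -/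
noncomputable def mhn : ℕ → ℕ → ℝ
  | _, 0 => 1
  | n, m + 1 => ∑ j ∈ Finset.Icc 1 n, (1 / (j : ℝ)) * mhn (j - 1) m

/-!
Put `F_m = Σ_n ζ_{n-1}({1}_m) Xⁿ / n`, so that `F_0 = Σ_{n ≥ 1} Xⁿ / n` is the series of
`-log (1 - X)`. The recursion defining `ζ_n({1}_{m+1})` says exactly that
`F_{m+1}' = F_m · (1 - X)⁻¹`, while `F_0' = (1 - X)⁻¹`; comparing derivatives gives the formal
identity `F_0^{m+1} = (m+1)! F_m`.
For `|x| < 1` the power `(-log (1 - x))^{m+1}` is then evaluated coefficientwise by Cauchy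
products of absolutely convergent series. At `x = -1` the coefficients of `F_m` tend to zero and
have summable variation, because `ζ_n({1}_m) ≤ (1 + log n)^m = o(√n)`; hence the alternating
series converges, and Abel's theorem identifies its sum with the limit of the function.
-/

open PowerSeries Asymptotics Real Topology
open scoped Nat

lemma Finset.sum_range_succ_eq_sum_Icc_one {M : Type*} [AddCommMonoid M] {f : ℕ → M}
    (hf : f 0 = 0) (n : ℕ) : ∑ i ∈ range (n + 1), f i = ∑ i ∈ Icc 1 n, f i := by
  rw [Nat.range_succ_eq_Icc_zero, ← insert_Icc_add_one_left_eq_Icc n.zero_le, sum_insert (by simp),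
    hf, zero_add, zero_add]

@[simp] lemma mhn_zero_right (n : ℕ) : mhn n 0 = 1 := rfl

lemma mhn_succ_right (n m : ℕ) :
    mhn n (m + 1) = ∑ j ∈ Icc 1 n, 1 / (j : ℝ) * mhn (j - 1) m := rfl

lemma mhn_succ_succ (n m : ℕ) : mhn (n + 1) (m + 1) = mhn n (m + 1) + mhn n m / (n + 1) := by
  rw [mhn_succ_right, mhn_succ_right, sum_Icc_succ_top (by omega)]
  push_cast
  simp [div_eq_inv_mul]

lemma mhn_nonneg (n m : ℕ) : 0 ≤ mhn n m := by
  induction m generalizing n with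
  | zero => simp
  | succ m ih => exact sum_nonneg fun j _ => mul_nonneg (by positivity) (ih _)

lemma mhn_le_succ (n m : ℕ) : mhn n m ≤ mhn (n + 1) m := by
  cases m with
  | zero => simp
  | succ m =>
    rw [mhn_succ_succ]
    exact le_add_of_nonneg_right (div_nonneg (mhn_nonneg n m) (by positivity))

lemma mhn_succ_le (n m : ℕ) : mhn (n + 1) m ≤ mhn n m + mhn n (m - 1) / (n + 1) := by
  cases m with
  | zero => exact le_add_of_nonneg_right (div_nonneg (mhn_nonneg n _) (by positivity))
  | succ m => simp [mhn_succ_succ]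

lemma mhn_monotone (m : ℕ) : Monotone fun n => mhn n m :=
  monotone_nat_of_le_succ fun n => mhn_le_succ n m

lemma mhn_one (n : ℕ) : mhn n 1 = harmonic n := by
  simp [mhn_succ_right, harmonic_eq_sum_Icc]

lemma mhn_le_mhn_one_pow (n m : ℕ) : mhn n m ≤ mhn n 1 ^ m := by
  induction m generalizing n with
  | zero => simp
  | succ m ih =>
    calc mhn n (m + 1) ≤ ∑ j ∈ Icc 1 n, 1 / (j : ℝ) * mhn n 1 ^ m := by
          refine sum_le_sum fun j hj => mul_le_mul_of_nonneg_left ?_ (by positivity)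
          exact (ih _).trans (pow_le_pow_left₀ (mhn_nonneg _ _)
            (mhn_monotone 1 (by simp at hj; omega)) m)
      _ = mhn n 1 ^ (m + 1) := by
          rw [← sum_mul, pow_succ']
          simp [mhn_succ_right]

lemma isLittleO_mhn (m : ℕ) {s : ℝ} (hs : 0 < s) :
    (fun n : ℕ => mhn n m) =o[atTop] fun n => (n : ℝ) ^ s := by
  have hlog : (fun x : ℝ => (1 + log x) ^ m) =o[atTop] fun x => x ^ s := by
    refine (((isLittleO_const_log_atTop (c := 1)).isBigO.add (isBigO_refl log atTop)).pow m
      |>.trans_isLittleO ?_)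
    simpa using isLittleO_log_rpow_rpow_atTop (m : ℝ) hs
  refine (isBigO_of_le _ fun n => ?_).trans_isLittleO
    (hlog.comp_tendsto tendsto_natCast_atTop_atTop)
  have h1 : mhn n 1 ≤ 1 + log n := by
    rw [mhn_one]; exact_mod_cast harmonic_le_one_add_log n
  rw [norm_of_nonneg (mhn_nonneg n m), Function.comp_apply,
    norm_of_nonneg (pow_nonneg (by positivity [log_natCast_nonneg n]) m)]
  exact (mhn_le_mhn_one_pow n m).trans (pow_le_pow_left₀ (mhn_nonneg n 1) h1 m)

-- The constant coefficient is `0` through `x / 0 = 0`.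
noncomputable def mhnSeries (m : ℕ) : ℝ⟦X⟧ := PowerSeries.mk fun n => mhn (n - 1) m / n

@[simp] lemma coeff_mhnSeries (m n : ℕ) : coeff n (mhnSeries m) = mhn (n - 1) m / n :=
  coeff_mk _ _

lemma constantCoeff_mhnSeries (m : ℕ) : constantCoeff (mhnSeries m) = 0 := by
  simp [← coeff_zero_eq_constantCoeff_apply]

lemma derivative_mhnSeries_zero : d⁄dX ℝ (mhnSeries 0) = PowerSeries.mk 1 := by
  ext n
  simp only [coeff_derivative, coeff_mhnSeries, add_tsub_cancel_right, mhn_zero_right, coeff_mk,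
    Nat.cast_add, Nat.cast_one, Pi.one_apply]
  field_simp

lemma derivative_mhnSeries_succ (m : ℕ) :
    d⁄dX ℝ (mhnSeries (m + 1)) = mhnSeries m * PowerSeries.mk 1 := by
  ext n
  rw [coeff_derivative, coeff_mhnSeries, coeff_mul, Nat.sum_antidiagonal_eq_sum_range_succ_mk,
    add_tsub_cancel_right, mhn_succ_right, sum_range_succ_eq_sum_Icc_one (by simp)]
  push_cast
  rw [div_mul_cancel₀ _ (by positivity)]
  exact sum_congr rfl fun i _ => by simp [div_eq_inv_mul]

theorem mhnSeries_zero_pow_succ (m : ℕ) :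
    mhnSeries 0 ^ (m + 1) = ((m + 1)! : ℝ) • mhnSeries m := by
  induction m with
  | zero => simp
  | succ m ih =>
    refine derivative.ext ?_ ?_
    · rw [derivative_pow, add_tsub_cancel_right, ih, derivative_mhnSeries_zero, Derivation.map_smul,
        derivative_mhnSeries_succ, smul_eq_C_mul, smul_eq_C_mul, Nat.factorial_succ (m + 1)]
      push_cast
      rw [← map_natCast (C (R := ℝ))]
      simp only [map_mul, map_add, map_natCast, map_one]
      ring
    · simp [constantCoeff_mhnSeries]

lemma PowerSeries.coeff_mul_mul_pow {R : Type*} [CommSemiring R] (f g : R⟦X⟧) (x : R) (n : ℕ) :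
    coeff n (f * g) * x ^ n =
      ∑ p ∈ antidiagonal n, coeff p.1 f * x ^ p.1 * (coeff p.2 g * x ^ p.2) := by
  rw [coeff_mul, sum_mul]
  refine sum_congr rfl fun p hp => ?_
  rw [← mem_antidiagonal.1 hp, pow_add]
  ring

namespace PowerSeries

variable {R : Type*} [NormedCommRing R] {x : R}

lemma summable_norm_coeff_mul_mul_pow {f g : R⟦X⟧}
    (hf : Summable fun n => ‖coeff n f * x ^ n‖) (hg : Summable fun n => ‖coeff n g * x ^ n‖) :
    Summable fun n => ‖coeff n (f * g) * x ^ n‖ := by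
  simpa only [coeff_mul_mul_pow] using summable_norm_sum_mul_antidiagonal_of_summable_norm hf hg

lemma summable_norm_coeff_pow_mul_pow {f : R⟦X⟧} (hf : Summable fun n => ‖coeff n f * x ^ n‖)
    (k : ℕ) : Summable fun n => ‖coeff n (f ^ k) * x ^ n‖ := by
  induction k with
  | zero =>
    refine summable_of_ne_finset_zero (s := {0}) fun n hn => ?_
    simp [coeff_one, Finset.mem_singleton.not.1 hn]
  | succ k ih => simpa only [pow_succ] using summable_norm_coeff_mul_mul_pow ih hf

variable [CompleteSpace R]

lemma tsum_coeff_mul_mul_pow {f g : R⟦X⟧}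
    (hf : Summable fun n => ‖coeff n f * x ^ n‖) (hg : Summable fun n => ‖coeff n g * x ^ n‖) :
    ∑' n, coeff n (f * g) * x ^ n = (∑' n, coeff n f * x ^ n) * ∑' n, coeff n g * x ^ n := by
  simp only [coeff_mul_mul_pow]
  exact (tsum_mul_tsum_eq_tsum_sum_antidiagonal_of_summable_norm hf hg).symm

lemma hasSum_coeff_pow_mul_pow {f : R⟦X⟧} (hf : Summable fun n => ‖coeff n f * x ^ n‖)
    {a : R} (ha : HasSum (fun n => coeff n f * x ^ n) a) (k : ℕ) :
    HasSum (fun n => coeff n (f ^ k) * x ^ n) (a ^ k) := by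
  refine (summable_norm_coeff_pow_mul_pow hf k).of_norm.hasSum_iff.2 ?_
  induction k with
  | zero =>
    rw [tsum_eq_single 0 fun n hn => by simp [coeff_one, hn]]
    simp
  | succ k ih =>
    rw [pow_succ, tsum_coeff_mul_mul_pow (summable_norm_coeff_pow_mul_pow hf k) hf, ih,
      ha.tsum_eq, pow_succ]

end PowerSeries

lemma summable_norm_coeff_mhnSeries_zero_mul_pow {x : ℝ} (hx : |x| < 1) :
    Summable fun n => ‖coeff n (mhnSeries 0) * x ^ n‖ := by
  refine (summable_geometric_of_lt_one (abs_nonneg x) hx).of_nonneg_of_le (fun _ => norm_nonneg _)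
    fun n => ?_
  rw [norm_mul, norm_pow, norm_eq_abs, coeff_mhnSeries, mhn_zero_right, one_div,
    abs_of_nonneg (by positivity)]
  exact mul_le_of_le_one_left (by positivity) (Nat.cast_inv_le_one n)

lemma hasSum_coeff_mhnSeries_zero_mul_pow {x : ℝ} (hx : |x| < 1) :
    HasSum (fun n => coeff n (mhnSeries 0) * x ^ n) (-log (1 - x)) := by
  refine (hasSum_nat_add_iff' 1).mp ?_
  simpa [div_eq_inv_mul, mul_comm] using hasSum_pow_div_log_of_abs_lt_one hx

lemma hasSum_coeff_mhnSeries_zero_pow_mul_pow (k : ℕ) {x : ℝ} (hx : |x| < 1) :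
    HasSum (fun n => coeff n (mhnSeries 0 ^ k) * x ^ n) ((-log (1 - x)) ^ k) :=
  hasSum_coeff_pow_mul_pow (summable_norm_coeff_mhnSeries_zero_mul_pow hx)
    (hasSum_coeff_mhnSeries_zero_mul_pow hx) k

lemma tendsto_coeff_mhnSeries (m : ℕ) : Tendsto (fun n => coeff n (mhnSeries m)) atTop (𝓝 0) := by
  have h := (isLittleO_mhn m one_pos).tendsto_div_nhds_zero
  simp only [rpow_one] at h
  refine squeeze_zero (fun n => ?_) (fun n => ?_) h
  · simpa using div_nonneg (mhn_nonneg (n - 1) m) n.cast_nonneg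
  · rw [coeff_mhnSeries]
    exact div_le_div_of_nonneg_right (mhn_monotone m (Nat.sub_le n 1)) n.cast_nonneg

lemma abs_div_add_one_sub_div_le {N b b' d d' : ℝ} (hN : 0 < N) (hb : 0 ≤ b) (hd : 0 ≤ d)
    (hbb' : b ≤ b') (hb'b : b' ≤ b + d / N) (hdd' : d ≤ d') :
    |b' / (N + 1) - b / N| ≤ (b' + d') / N ^ 2 := by
  have hb'N : b' * N ≤ b * N + d := by
    simpa [add_mul, div_mul_cancel₀ _ hN.ne'] using mul_le_mul_of_nonneg_right hb'b hN.le
  rw [abs_sub_le_iff]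
  constructor
  · rw [div_sub_div _ _ (by positivity) hN.ne', div_le_div_iff₀ (by positivity) (by positivity)]
    nlinarith [mul_nonneg (hb.trans hbb') hN.le, mul_nonneg hb hN.le]
  · rw [div_sub_div _ _ hN.ne' (by positivity), div_le_div_iff₀ (by positivity) (by positivity)]
    nlinarith [mul_nonneg (sub_nonneg.2 hbb') (by positivity : 0 ≤ (N + 1) * N ^ 2),
      mul_nonneg (hb.trans hbb') hN.le,
      mul_nonneg (hd.trans hdd') (by positivity : 0 ≤ N * (N + 1))]

lemma abs_coeff_mhnSeries_succ_sub_le (m n : ℕ) :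
    |coeff (n + 1 + 1) (mhnSeries m) - coeff (n + 1) (mhnSeries m)| ≤
      (mhn (n + 1) m + mhn (n + 1) (m - 1)) / (n + 1) ^ 2 := by
  simp only [coeff_mhnSeries, Nat.add_sub_cancel]
  push_cast
  refine abs_div_add_one_sub_div_le (by positivity) (mhn_nonneg n m) (mhn_nonneg n (m - 1))
    (mhn_le_succ n m) ?_ (mhn_le_succ n (m - 1))
  exact_mod_cast mhn_succ_le n m

lemma summable_abs_coeff_mhnSeries_succ_sub (m : ℕ) :
    Summable fun n => |coeff (n + 1) (mhnSeries m) - coeff n (mhnSeries m)| := by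
  refine summable_of_isBigO_nat (Real.summable_nat_rpow.2 (by norm_num : (-3 / 2 : ℝ) < -1)) ?_
  have hbound : (fun n => |coeff (n + 1) (mhnSeries m) - coeff n (mhnSeries m)|) =O[atTop]
      fun n : ℕ => (mhn n m + mhn n (m - 1)) * ((n : ℝ) ^ 2)⁻¹ := by
    refine IsBigO.of_bound 1 ?_
    filter_upwards [eventually_ge_atTop 1] with n hn
    obtain ⟨k, rfl⟩ := Nat.exists_eq_add_of_le' hn
    rw [norm_abs_eq_norm, one_mul, ← div_eq_mul_inv,
      norm_of_nonneg (div_nonneg (add_nonneg (mhn_nonneg _ _) (mhn_nonneg _ _)) (by positivity))]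
    simpa using abs_coeff_mhnSeries_succ_sub_le m k
  have hhalf : (0 : ℝ) < 1 / 2 := by norm_num
  refine hbound.trans ((((isLittleO_mhn m hhalf).add (isLittleO_mhn (m - 1) hhalf)).isBigO.mul
    (isBigO_refl _ _)).congr' EventuallyEq.rfl ?_)
  filter_upwards [eventually_ne_atTop 0] with n hn
  rw [← div_eq_mul_inv, ← rpow_sub_natCast (Nat.cast_ne_zero.2 hn)]
  norm_num

lemma exists_tendsto_sum_neg_one_pow_mul {a : ℕ → ℝ} (ha : Tendsto a atTop (𝓝 0))
    (hv : Summable fun n => |a (n + 1) - a n|) :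
    ∃ l, Tendsto (fun N => ∑ n ∈ range N, (-1) ^ n * a n) atTop (𝓝 l) := by
  -- `a = (a + t) - t`, where `t` is the tail of the variation series; both terms are antitone.
  set t : ℕ → ℝ := fun n => ∑' i, |a (i + n + 1) - a (i + n)|
  have ht : ∀ n, t n = |a (n + 1) - a n| + t (n + 1) := fun n => by
    simp only [t, ((summable_nat_add_iff n).2 hv).tsum_eq_zero_add]
    simp [add_right_comm _ 1 n, add_assoc]
  have ht0 : Tendsto t atTop (𝓝 0) := tendsto_sum_nat_add fun i => |a (i + 1) - a i|
  have ht_anti : Antitone t := antitone_nat_of_succ_le fun n => by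
    linarith [ht n, abs_nonneg (a (n + 1) - a n)]
  have hat_anti : Antitone fun n => a n + t n := antitone_nat_of_succ_le fun n => by
    linarith [ht n, le_abs_self (a (n + 1) - a n)]
  obtain ⟨l₁, h₁⟩ := hat_anti.tendsto_alternating_series_of_tendsto_zero (by simpa using ha.add ht0)
  obtain ⟨l₂, h₂⟩ := ht_anti.tendsto_alternating_series_of_tendsto_zero ht0
  exact ⟨l₁ - l₂, (h₁.sub h₂).congr fun N => by simp [← sum_sub_distrib, mul_add]⟩

lemma eq_of_tendsto_sum_range_of_hasSum_pow {a : ℕ → ℝ} {f : ℝ → ℝ} {l : ℝ}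
    (hl : Tendsto (fun N => ∑ n ∈ range N, a n) atTop (𝓝 l))
    (hf : ContinuousWithinAt f (Set.Iio 1) 1)
    (ha : ∀ y ∈ Set.Ioo (0 : ℝ) 1, HasSum (fun n => a n * y ^ n) (f y)) : l = f 1 := by
  refine tendsto_nhds_unique (tendsto_tsum_powerSeries_nhdsWithin_lt hl) (hf.tendsto.congr' ?_)
  filter_upwards [Ioo_mem_nhdsLT (zero_lt_one' ℝ)] with y hy using (ha y hy).tsum_eq.symm

theorem tendsto_sum_coeff_mhnSeries_zero_pow_mul_pow (m : ℕ) {x : ℝ} (hx1 : -1 ≤ x) (hx2 : x < 1) :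
    Tendsto (fun N => ∑ n ∈ range N, coeff n (mhnSeries 0 ^ (m + 1)) * x ^ n) atTop
      (𝓝 ((-log (1 - x)) ^ (m + 1))) := by
  rcases hx1.eq_or_lt with rfl | hx1
  · obtain ⟨l, hl⟩ := exists_tendsto_sum_neg_one_pow_mul (tendsto_coeff_mhnSeries m)
      (summable_abs_coeff_mhnSeries_succ_sub m)
    have hl' : Tendsto (fun N => ∑ n ∈ range N, coeff n (mhnSeries 0 ^ (m + 1)) * (-1) ^ n) atTop
        (𝓝 ((m + 1)! * l)) := by
      simpa [mhnSeries_zero_pow_succ, mul_sum, mul_comm, mul_left_comm, mul_assoc] using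
        hl.const_mul ((m + 1)! : ℝ)
    convert hl' using 2
    rw [eq_of_tendsto_sum_range_of_hasSum_pow hl' (f := fun y => (-log (1 + y)) ^ (m + 1))
      ?_ fun y hy => ?_]
    · norm_num
    · exact ContinuousAt.continuousWithinAt (by fun_prop (disch := norm_num))
    · have hy' : |-y| < 1 := by rw [abs_neg, abs_of_pos hy.1]; exact hy.2
      simpa [mul_assoc, ← mul_pow] using hasSum_coeff_mhnSeries_zero_pow_mul_pow (m + 1) hy'
  · exact (hasSum_coeff_mhnSeries_zero_pow_mul_pow _ (abs_lt.2 ⟨hx1, hx2⟩)).tendsto_sum_nat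

theorem stmt_0 (k : ℕ) (hk : 1 ≤ k) (x : ℝ) (hx1 : -1 ≤ x) (hx2 : x < 1) :
    Tendsto (fun N : ℕ =>
        (-1 : ℝ) ^ k * (Nat.factorial k : ℝ) *
          ∑ n ∈ Finset.Icc 1 N, x ^ n / (n : ℝ) * mhn (n - 1) (k - 1))
      atTop (nhds ((Real.log (1 - x)) ^ k)) := by
  obtain ⟨m, rfl⟩ := Nat.exists_eq_add_of_le' hk
  have h := ((tendsto_sum_coeff_mhnSeries_zero_pow_mul_pow m hx1 hx2).comp
    (tendsto_add_atTop_nat 1)).const_mul ((-1 : ℝ) ^ (m + 1))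
  rw [← mul_pow, neg_one_mul, neg_neg] at h
  refine h.congr fun N => ?_
  rw [Function.comp_apply, mhnSeries_zero_pow_succ, add_tsub_cancel_right, mul_assoc,
    ← sum_range_succ_eq_sum_Icc_one (f := fun n : ℕ => x ^ n / (n : ℝ) * mhn (n - 1) m) (by simp)]
  congr 1
  rw [mul_sum]
  exact sum_congr rfl fun n _ => by rw [coeff_smul, coeff_mhnSeries]; ring
end

section
/- The multiple polylogarithm value ζ(2,1; 1/2) := Σ_{n > m ≥ 1} (1/2)^n / (n^2 m) equals (1/8) ζ(3) − (1/6) ln^3 2. -/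
open Filter

/-- Riemann zeta value at a positive integer. -/
noncomputable def zetaR (s : ℕ) : ℝ := ∑' n : ℕ, 1 / ((n : ℝ) + 1) ^ s

/-- Polylogarithm Li_p(x). -/
noncomputable def polyLog (p : ℕ) (x : ℝ) : ℝ := ∑' n : ℕ, x ^ (n + 1) / ((n : ℝ) + 1) ^ p

/-!
Write `H n` for the harmonic numbers. Squaring `-log (1 - x) = ∑ xⁿ / n` gives
`log (1 - x) ^ 2 = 2 ∑ H (n - 1) xⁿ / n`, so integrating `log (1 - t) ^ 2 / t` termwise
shows that the series is `P / 2` with `P = ∫₀^{1/2} log (1 - t) ^ 2 / t`.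
Let `Q = ∫₀^{1/2} log t ^ 2 / (1 - t)` and `I = ∫₀¹ log (1 + u) ^ 2 / u`.
The reflection `t ↦ 1 - t` gives `P + Q = ∫₀¹ log u ^ 2 / (1 - u) = 2 ζ(3)`.
The substitution `t = u / (1 + u)` gives `P = I - log 2 ^ 3 / 3` and, after an integration
by parts, `Q = ∫₀¹ log u ^ 2 / (1 + u) + I + log 2 ^ 3 / 3`. Both `ζ(3)` integrals are computed
termwise from `∫₀¹ uᵏ log u ^ 2 = 2 / (k + 1) ^ 3`; the second one is `3/2 ζ(3)` because
`∑ (-1)ᵏ / (k + 1) ^ 3 = 3/4 ζ(3)`. Eliminating `I` and `Q` leaves `P = ζ(3) / 4 - log 2 ^ 3 / 3`.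
-/

open Real Topology Set MeasureTheory intervalIntegral

theorem sum_Ico_one_div_eq_harmonic (n : ℕ) :
    ∑ m ∈ Finset.Ico 1 (n + 1), 1 / (m : ℝ) = harmonic n := by
  rw [harmonic_eq_sum_Icc, ← Finset.Ico_add_one_right_eq_Icc]
  push_cast
  simp_rw [one_div]

theorem harmonic_eq_sum_range_one_div (n : ℕ) :
    (harmonic n : ℝ) = ∑ i ∈ Finset.range n, 1 / ((i : ℝ) + 1) := by
  simp [harmonic]

theorem sum_range_one_div_mul_sub_eq_harmonic (n : ℕ) :
    ∑ i ∈ Finset.range (n + 1), 1 / (((i : ℝ) + 1) * (((n - i : ℕ) : ℝ) + 1)) =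
      2 * harmonic (n + 1) / ((n : ℝ) + 2) := by
  have partial_fractions : ∀ i ∈ Finset.range (n + 1),
      1 / (((i : ℝ) + 1) * (((n - i : ℕ) : ℝ) + 1)) =
        (1 / ((i : ℝ) + 1) + 1 / (((n - i : ℕ) : ℝ) + 1)) / ((n : ℝ) + 2) := by
    intro i hi
    have hin : i ≤ n := Nat.lt_succ_iff.mp (Finset.mem_range.mp hi)
    rw [Nat.cast_sub hin]
    have : (n : ℝ) - i + 1 ≠ 0 := by
      have : (i : ℝ) ≤ n := by exact_mod_cast hin
      linarith
    field_simp
    ring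
  have reflect := Finset.sum_range_reflect (fun j => 1 / ((j : ℝ) + 1)) (n + 1)
  simp only [add_tsub_cancel_right] at reflect
  rw [Finset.sum_congr rfl partial_fractions, ← Finset.sum_div, Finset.sum_add_distrib, reflect,
    harmonic_eq_sum_range_one_div]
  ring

theorem hasSum_log_one_sub_sq {x : ℝ} (hx : |x| < 1) :
    HasSum (fun n : ℕ => 2 * harmonic (n + 1) / ((n : ℝ) + 2) * x ^ (n + 2))
      (log (1 - x) ^ 2) := by
  set a : ℕ → ℝ := fun n => x ^ (n + 1) / ((n : ℝ) + 1)
  have ha : Summable fun n => ‖a n‖ := by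
    refine Summable.of_nonneg_of_le (fun n => norm_nonneg _) (fun n => ?_)
      ((summable_geometric_of_lt_one (abs_nonneg x) hx).mul_left |x|)
    rw [norm_div, norm_pow, Real.norm_eq_abs, pow_succ', Real.norm_of_nonneg (by positivity)]
    exact div_le_self (by positivity) (by linarith [n.cast_nonneg (α := ℝ)])
  have cauchy_product (n : ℕ) :
      ∑ kl ∈ Finset.HasAntidiagonal.antidiagonal n, a kl.1 * a kl.2 =
        2 * harmonic (n + 1) / ((n : ℝ) + 2) * x ^ (n + 2) := by
    rw [Finset.Nat.sum_antidiagonal_eq_sum_range_succ_mk, ← sum_range_one_div_mul_sub_eq_harmonic,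
      Finset.sum_mul]
    refine Finset.sum_congr rfl fun i hi => ?_
    have : i + 1 + (n - i + 1) = n + 2 := by have := Finset.mem_range.mp hi; omega
    simp only [a, div_mul_div_comm, ← pow_add, this]
    ring
  have hlog : ∑' n, a n = -log (1 - x) := (Real.hasSum_pow_div_log_of_abs_lt_one hx).tsum_eq
  have := (summable_norm_sum_mul_antidiagonal_of_summable_norm ha ha).of_norm.hasSum
  rwa [← tsum_mul_tsum_eq_tsum_sum_antidiagonal_of_summable_norm ha ha, hlog, neg_mul_neg,
    ← sq, funext cauchy_product] at this

theorem summable_one_div_nat_add_one_pow {p : ℕ} (hp : 1 < p) :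
    Summable fun n : ℕ => 1 / ((n : ℝ) + 1) ^ p := by
  have := (summable_nat_add_iff 1).mpr (Real.summable_one_div_nat_pow.mpr hp)
  exact_mod_cast this

theorem hasSum_zetaR {p : ℕ} (hp : 1 < p) :
    HasSum (fun n : ℕ => 1 / ((n : ℝ) + 1) ^ p) (zetaR p) :=
  (summable_one_div_nat_add_one_pow hp).hasSum

theorem hasSum_neg_one_pow_div_nat_add_one_pow {p : ℕ} (hp : 1 < p) :
    HasSum (fun k : ℕ => (-1 : ℝ) ^ k / ((k : ℝ) + 1) ^ p) ((1 - 2 / 2 ^ p) * zetaR p) := by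
  set f : ℕ → ℝ := fun k => 1 / ((k : ℝ) + 1) ^ p
  have hf : HasSum f (zetaR p) := hasSum_zetaR hp
  have hodd : HasSum (fun j => f (2 * j + 1)) (zetaR p / 2 ^ p) := by
    have hscale : (fun j => f (2 * j + 1)) = fun j => f j / 2 ^ p := by
      ext j
      simp only [f]
      rw [div_div, ← mul_pow]
      push_cast
      ring_nf
    rw [hscale]
    exact hf.div_const _
  have heven : HasSum (fun j => f (2 * j)) (zetaR p - zetaR p / 2 ^ p) := by
    have hsummable : Summable fun j => f (2 * j) :=
      (summable_one_div_nat_add_one_pow hp).comp_injective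
        (mul_right_injective₀ (two_ne_zero (α := ℕ)))
    have hsplit := (hsummable.hasSum.even_add_odd hodd).unique hf
    rw [show zetaR p - zetaR p / 2 ^ p = ∑' j, f (2 * j) by linarith]
    exact hsummable.hasSum
  have hsign_even : (fun j : ℕ => (-1 : ℝ) ^ (2 * j) / (((2 * j : ℕ) : ℝ) + 1) ^ p) =
      fun j => f (2 * j) := by
    ext j; simp [f, pow_mul]
  have hsign_odd : (fun j : ℕ => (-1 : ℝ) ^ (2 * j + 1) / (((2 * j + 1 : ℕ) : ℝ) + 1) ^ p) =
      fun j => -f (2 * j + 1) := by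
    ext j; simp [f, pow_succ, pow_mul, neg_div]
  have halt := HasSum.even_add_odd (f := fun k : ℕ => (-1 : ℝ) ^ k / ((k : ℝ) + 1) ^ p)
    (by rw [hsign_even]; exact heven) (by rw [hsign_odd]; exact hodd.neg)
  convert halt using 1
  ring

section TermwiseIntegration

variable {α E : Type*} [MeasurableSpace α] {μ : Measure α} [NormedAddCommGroup E]
  {F : ℕ → α → E} {f : α → E}

theorem integrable_of_hasSum_of_summable_integral_norm (hF : ∀ n, Integrable (F n) μ)
    (hsum : Summable fun n => ∫ a, ‖F n a‖ ∂μ)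
    (hf : ∀ᵐ a ∂μ, HasSum (fun n => F n a) (f a)) :
    Integrable f μ := by
  refine ⟨aestronglyMeasurable_of_tendsto_ae atTop
    (fun n => Finset.aestronglyMeasurable_fun_sum (Finset.range n) fun i _ => (hF i).1)
    (hf.mono fun a ha => ha.tendsto_sum_nat), ?_⟩
  have hfinite : ∫⁻ a, ∑' n, ‖F n a‖ₑ ∂μ < ⊤ := by
    rw [lintegral_tsum fun n => (hF n).1.enorm]
    simp_rw [← ofReal_integral_norm_eq_lintegral_enorm (hF _)]
    rw [← ENNReal.ofReal_tsum_of_nonneg (fun n => integral_nonneg fun a => norm_nonneg _) hsum]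
    exact ENNReal.ofReal_lt_top
  refine lt_of_le_of_lt (lintegral_mono_ae ?_) hfinite
  filter_upwards [hf] with a ha
  rw [← ha.tsum_eq]
  exact enorm_tsum_le_tsum_enorm

theorem hasSum_integral_of_hasSum [NormedSpace ℝ E] (hF : ∀ n, Integrable (F n) μ)
    (hsum : Summable fun n => ∫ a, ‖F n a‖ ∂μ)
    (hf : ∀ᵐ a ∂μ, HasSum (fun n => F n a) (f a)) :
    HasSum (fun n => ∫ a, F n a ∂μ) (∫ a, f a ∂μ) := by
  rw [integral_congr_ae (hf.mono fun a ha => ha.tsum_eq.symm)]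
  exact hasSum_integral_of_summable_integral_norm hF hsum

end TermwiseIntegration

theorem tendsto_mul_log_pow_nhdsGT_zero (n : ℕ) :
    Tendsto (fun u => u * log u ^ n) (𝓝[>] 0) (𝓝 0) := by
  cases n with
  | zero =>
    simp only [pow_zero, mul_one]
    exact (continuous_id.tendsto (0 : ℝ)).mono_left nhdsWithin_le_nhds
  | succ n =>
    have h := (tendsto_log_mul_rpow_nhdsGT_zero (r := ((n + 1 : ℕ) : ℝ)⁻¹)
      (by positivity)).pow (n + 1)
    rw [zero_pow n.succ_ne_zero] at h
    refine h.congr' ?_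
    filter_upwards [self_mem_nhdsWithin] with u (hu : 0 < u)
    rw [mul_pow, Real.rpow_inv_natCast_pow hu.le n.succ_ne_zero, mul_comm]

theorem tendsto_pow_succ_mul_log_pow_nhdsGT_zero (k j : ℕ) :
    Tendsto (fun u => u ^ (k + 1) * log u ^ j) (𝓝[>] 0) (𝓝 0) := by
  have := ((continuous_pow k).tendsto 0).mono_left nhdsWithin_le_nhds |>.mul
    (tendsto_mul_log_pow_nhdsGT_zero j)
  simpa [pow_succ, mul_assoc] using this

theorem continuousOn_Icc_of_continuousAt_of_tendsto_nhdsGT {f : ℝ → ℝ} {a b : ℝ}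
    (hf : ∀ x ∈ Ioc a b, ContinuousAt f x) (ha : Tendsto f (𝓝[>] a) (𝓝 (f a))) :
    ContinuousOn f (Icc a b) := by
  intro x hx
  rcases hx.1.eq_or_lt with rfl | hax
  · exact (continuousWithinAt_Ioi_iff_Ici.mp ha).mono Icc_subset_Ici_self
  · exact (hf x ⟨hax, hx.2⟩).continuousWithinAt

theorem intervalIntegrable_and_integral_pow_mul_log_sq (k : ℕ) :
    IntervalIntegrable (fun u => u ^ k * log u ^ 2) volume 0 1 ∧
      ∫ u in (0 : ℝ)..1, u ^ k * log u ^ 2 = 2 / ((k : ℝ) + 1) ^ 3 := by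
  set c : ℝ := k + 1
  have hc : c ≠ 0 := by positivity
  set F : ℝ → ℝ := fun u => u ^ (k + 1) * (log u ^ 2 / c - 2 * log u / c ^ 2 + 2 / c ^ 3)
  have hderiv : ∀ x ≠ 0, HasDerivAt F (x ^ k * log x ^ 2) x := by
    intro x hx
    have hlog := Real.hasDerivAt_log hx
    refine ((hasDerivAt_pow (k + 1) x).mul
      ((((hlog.pow 2).div_const c).sub ((hlog.const_mul 2).div_const (c ^ 2))).add_const
        (2 / c ^ 3))).congr_deriv ?_
    simp only [c, Pi.sub_apply, Pi.pow_apply]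
    field_simp
    push_cast
    ring
  have hlim : Tendsto F (𝓝[>] 0) (𝓝 (F 0)) := by
    have hpow := tendsto_pow_succ_mul_log_pow_nhdsGT_zero k
    have := (((hpow 2).div_const c).sub (((hpow 1).const_mul 2).div_const (c ^ 2))).add
      ((hpow 0).const_mul (2 / c ^ 3))
    simp only [F, zero_pow k.succ_ne_zero, zero_mul]
    convert this using 2 <;> ring
  have hcont : ContinuousOn F (Icc 0 1) :=
    continuousOn_Icc_of_continuousAt_of_tendsto_nhdsGT
      (fun x hx => (hderiv x hx.1.ne').continuousAt) hlim
  have hint : IntervalIntegrable (fun u => u ^ k * log u ^ 2) volume 0 1 := by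
    refine intervalIntegrable_deriv_of_nonneg (g := F) ?_ ?_ ?_ <;>
      simp only [uIcc_of_le zero_le_one, zero_le_one, min_eq_left, max_eq_right]
    · exact hcont
    · exact fun x hx => hderiv x hx.1.ne'
    · exact fun x hx => by have := hx.1; positivity
  refine ⟨hint, ?_⟩
  rw [integral_eq_sub_of_hasDerivAt_of_le zero_le_one hcont (fun x hx => hderiv x hx.1.ne') hint]
  simp [F, c]

theorem intervalIntegrable_and_hasSum_integral_log_sq_div_one_sub_mul {r : ℝ} (hr : |r| ≤ 1) :
    IntervalIntegrable (fun u => log u ^ 2 / (1 - r * u)) volume 0 1 ∧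
      HasSum (fun k : ℕ => r ^ k * (2 / ((k : ℝ) + 1) ^ 3))
        (∫ u in (0 : ℝ)..1, log u ^ 2 / (1 - r * u)) := by
  set F : ℕ → ℝ → ℝ := fun k u => r ^ k * (u ^ k * log u ^ 2)
  have hF (k : ℕ) : Integrable (F k) (volume.restrict (Ioc 0 1)) :=
    ((intervalIntegrable_and_integral_pow_mul_log_sq k).1.1).const_mul _
  have hnorm (k : ℕ) : ∫ u in Ioc 0 1, ‖F k u‖ = |r| ^ k * (2 / ((k : ℝ) + 1) ^ 3) := by
    rw [← (intervalIntegrable_and_integral_pow_mul_log_sq k).2, integral_of_le zero_le_one,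
      ← MeasureTheory.integral_const_mul]
    refine setIntegral_congr_fun measurableSet_Ioc fun u hu => ?_
    simp only [F, norm_mul, norm_pow, Real.norm_eq_abs, abs_of_nonneg hu.1.le,
      sq_abs]
  have hsum : Summable fun k => ∫ u in Ioc 0 1, ‖F k u‖ := by
    simp_rw [hnorm]
    refine Summable.of_nonneg_of_le (fun k => by positivity) (fun k => ?_)
      ((summable_one_div_nat_add_one_pow (p := 3) (by norm_num)).mul_left 2)
    rw [mul_one_div]
    exact mul_le_of_le_one_left (by positivity) (pow_le_one₀ (abs_nonneg r) hr)
  have hgeom : ∀ᵐ u ∂volume.restrict (Ioc 0 1),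
      HasSum (fun k => F k u) (log u ^ 2 / (1 - r * u)) := by
    filter_upwards [ae_restrict_mem measurableSet_Ioc] with u ⟨hu0, hu1⟩
    rcases hu1.lt_or_eq with hu1 | rfl
    · have hru : ‖r * u‖ < 1 := by
        rw [norm_mul, Real.norm_eq_abs, Real.norm_of_nonneg hu0.le]
        nlinarith [abs_nonneg r]
      have := (hasSum_geometric_of_norm_lt_one hru).mul_right (log u ^ 2)
      rw [inv_mul_eq_div] at this
      simpa only [F, mul_pow, mul_assoc] using this
    -- at `u = 1` every term vanishes, and so does `log 1 ^ 2 / (1 - r)`, also when `r = 1`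
    · simp [F, hasSum_zero]
  refine ⟨(intervalIntegrable_iff_integrableOn_Ioc_of_le zero_le_one).2
    (integrable_of_hasSum_of_summable_integral_norm hF hsum hgeom), ?_⟩
  rw [integral_of_le zero_le_one]
  have hterm (k : ℕ) : ∫ u in Ioc 0 1, F k u = r ^ k * (2 / ((k : ℝ) + 1) ^ 3) := by
    rw [MeasureTheory.integral_const_mul, ← integral_of_le zero_le_one,
      (intervalIntegrable_and_integral_pow_mul_log_sq k).2]
  simpa only [hterm] using hasSum_integral_of_hasSum hF hsum hgeom

theorem integral_log_sq_div_one_sub :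
    ∫ u in (0 : ℝ)..1, log u ^ 2 / (1 - u) = 2 * zetaR 3 := by
  have h := (intervalIntegrable_and_hasSum_integral_log_sq_div_one_sub_mul (r := 1) (by simp)).2
  simp only [one_pow, one_mul] at h
  refine h.unique ?_
  simpa only [mul_one_div] using (hasSum_zetaR (p := 3) (by norm_num)).mul_left 2

theorem integral_log_sq_div_one_add :
    ∫ u in (0 : ℝ)..1, log u ^ 2 / (1 + u) = 3 / 2 * zetaR 3 := by
  have h := (intervalIntegrable_and_hasSum_integral_log_sq_div_one_sub_mul (r := -1) (by simp)).2
  simp only [neg_one_mul, sub_neg_eq_add] at h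
  have hsign : (fun k : ℕ => (-1 : ℝ) ^ k * (2 / ((k : ℝ) + 1) ^ 3)) =
      fun k : ℕ => 2 * ((-1) ^ k / ((k : ℝ) + 1) ^ 3) := by
    ext k; ring
  rw [hsign] at h
  rw [show (3 / 2 : ℝ) * zetaR 3 = 2 * ((1 - 2 / 2 ^ 3) * zetaR 3) by ring]
  exact h.unique ((hasSum_neg_one_pow_div_nat_add_one_pow (by norm_num)).mul_left 2)

theorem hasSum_pow_div_sq_mul_harmonic {a : ℝ} (ha0 : 0 ≤ a) (ha1 : a < 1) :
    HasSum (fun n : ℕ => a ^ (n + 1) / ((n : ℝ) + 1) ^ 2 * harmonic n)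
      (1 / 2 * ∫ t in (0 : ℝ)..a, log (1 - t) ^ 2 / t) := by
  set c : ℕ → ℝ := fun n => 2 * harmonic (n + 1) / ((n : ℝ) + 2)
  have hc (n : ℕ) : 0 ≤ c n := by
    have : (0 : ℝ) < harmonic (n + 1) := by exact_mod_cast harmonic_pos n.succ_ne_zero
    positivity
  set F : ℕ → ℝ → ℝ := fun n t => c n * t ^ (n + 1)
  have hF (n : ℕ) : Integrable (F n) (volume.restrict (Ioc 0 a)) :=
    (continuous_const.mul (continuous_pow _)).integrableOn_Ioc
  have hterm (n : ℕ) : ∫ t in Ioc 0 a, F n t = c n * (a ^ (n + 2) / ((n : ℝ) + 2)) := by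
    rw [← integral_of_le ha0, intervalIntegral.integral_const_mul, integral_pow]
    push_cast
    ring_nf
  have hnorm (n : ℕ) : ∫ t in Ioc 0 a, ‖F n t‖ = ∫ t in Ioc 0 a, F n t :=
    setIntegral_congr_fun measurableSet_Ioc fun t ht =>
      Real.norm_of_nonneg (mul_nonneg (hc n) (pow_nonneg ht.1.le _))
  have hsum : Summable fun n => ∫ t in Ioc 0 a, ‖F n t‖ := by
    simp_rw [hnorm, hterm]
    refine Summable.of_nonneg_of_le (fun n => mul_nonneg (hc n) (by positivity)) (fun n => ?_)
      (hasSum_log_one_sub_sq (x := a) (abs_lt.2 ⟨by linarith, ha1⟩)).summable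
    exact mul_le_mul_of_nonneg_left (div_le_self (by positivity) (by linarith)) (hc n)
  have hseries : ∀ᵐ t ∂volume.restrict (Ioc 0 a),
      HasSum (fun n => F n t) (log (1 - t) ^ 2 / t) := by
    filter_upwards [ae_restrict_mem measurableSet_Ioc] with t ht
    have := (hasSum_log_one_sub_sq (x := t)
      (abs_lt.2 ⟨by linarith [ht.1], by linarith [ht.2]⟩)).div_const t
    have hshift : (fun n : ℕ => c n * t ^ (n + 2) / t) = fun n => F n t := by
      ext n
      rw [pow_succ _ (n + 1), ← mul_assoc, mul_div_cancel_right₀ _ ht.1.ne']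
    rwa [hshift] at this
  have key := (hasSum_integral_of_hasSum hF hsum hseries).mul_left (1 / 2)
  have hreindex : (fun n => 1 / 2 * ∫ t in Ioc 0 a, F n t) =
      fun n : ℕ => a ^ (n + 1 + 1) / (((n + 1 : ℕ) : ℝ) + 1) ^ 2 * harmonic (n + 1) := by
    ext n
    rw [hterm]
    simp only [c]
    push_cast
    field_simp
    ring
  rw [hreindex, ← integral_of_le ha0] at key
  rw [← hasSum_nat_add_iff' 1]
  simpa using key

theorem integral_comp_div_one_add_mul_inv_sq {a : ℝ} (ha : 0 ≤ a) (g : ℝ → ℝ) :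
    ∫ u in (0 : ℝ)..a, g (u / (1 + u)) * (1 / (1 + u) ^ 2) =
      ∫ t in (0 : ℝ)..a / (1 + a), g t := by
  have hderiv : ∀ x ∈ Ioo (min 0 a) (max 0 a),
      HasDerivAt (fun u => u / (1 + u)) (1 / (1 + x) ^ 2) x := by
    intro x hx
    rw [min_eq_left ha] at hx
    have hx1 : 1 + x ≠ 0 := by linarith [hx.1]
    exact ((hasDerivAt_id' x).div ((hasDerivAt_id' x).const_add 1) hx1).congr_deriv (by ring)
  have hcont : ContinuousOn (fun u => u / (1 + u)) (uIcc 0 a) := by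
    rw [uIcc_of_le ha]
    exact continuousOn_id.div (continuousOn_const.add continuousOn_id)
      fun x hx => by linarith [hx.1]
  simpa using integral_comp_mul_deriv_of_deriv_nonneg (g := g) hcont hderiv
    fun x _ => by positivity

theorem log_one_add_le_self {u : ℝ} (hu : -1 < u) : log (1 + u) ≤ u := by
  linarith [Real.log_le_sub_one_of_pos (by linarith : 0 < 1 + u)]

theorem continuousOn_log_one_add_sq_div_one_add :
    ContinuousOn (fun u => log (1 + u) ^ 2 / (1 + u)) (Ici 0) := by
  have hpos : ∀ x ∈ Ici (0 : ℝ), 1 + x ≠ 0 := fun x hx => by linarith [mem_Ici.mp hx]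
  exact ((ContinuousOn.log (f := fun u => 1 + u) (by fun_prop) hpos).pow 2).div (by fun_prop) hpos

theorem integral_log_one_add_sq_div_one_add {a : ℝ} (ha : 0 ≤ a) :
    ∫ u in (0 : ℝ)..a, log (1 + u) ^ 2 / (1 + u) = log (1 + a) ^ 3 / 3 := by
  have hsub : uIcc 0 a ⊆ Ici 0 := by rw [uIcc_of_le ha]; exact Icc_subset_Ici_self
  have hderiv : ∀ x ∈ uIcc 0 a, HasDerivAt (fun u => log (1 + u) ^ 3 / 3)
      (log (1 + x) ^ 2 / (1 + x)) x := by
    intro x hx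
    have hx1 : 1 + x ≠ 0 := by linarith [mem_Ici.mp (hsub hx)]
    refine ((((hasDerivAt_id' x).const_add 1).log hx1).pow 3 |>.div_const 3).congr_deriv ?_
    field_simp
    ring
  rw [integral_eq_sub_of_hasDerivAt hderiv
    (continuousOn_log_one_add_sq_div_one_add.mono hsub).intervalIntegrable]
  simp

theorem intervalIntegrable_log_one_add_sq_div {a : ℝ} (ha : 0 ≤ a) :
    IntervalIntegrable (fun u => log (1 + u) ^ 2 / u) volume 0 a := by
  have hcont : ContinuousOn (fun u => log (1 + u)) (uIcc 0 a) := by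
    rw [uIcc_of_le ha]
    exact ContinuousOn.log (f := fun u => 1 + u) (by fun_prop) fun x hx => by linarith [hx.1]
  refine hcont.intervalIntegrable.mono_fun (by fun_prop : Measurable _).aestronglyMeasurable ?_
  rw [uIoc_of_le ha]
  filter_upwards [ae_restrict_mem measurableSet_Ioc] with u hu
  have hu0 : 0 < u := hu.1
  have hlog0 : 0 ≤ log (1 + u) := Real.log_nonneg (by linarith)
  have hlog := log_one_add_le_self (by linarith : -1 < u)
  rw [Real.norm_of_nonneg (by positivity), Real.norm_of_nonneg hlog0, div_le_iff₀ hu0, sq]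
  exact mul_le_mul_of_nonneg_left hlog hlog0

theorem intervalIntegrable_log_mul_log_one_add_div_one_add {a : ℝ} (ha : 0 ≤ a) :
    IntervalIntegrable (fun u => log u * log (1 + u) / (1 + u)) volume 0 a := by
  refine intervalIntegrable_log'.norm.mono_fun (by fun_prop : Measurable _).aestronglyMeasurable ?_
  rw [uIoc_of_le ha]
  filter_upwards [ae_restrict_mem measurableSet_Ioc] with u hu
  have hu0 : 0 < u := hu.1
  have hlog0 : 0 ≤ log (1 + u) := Real.log_nonneg (by linarith)
  have hlog := log_one_add_le_self (by linarith : -1 < u)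
  rw [norm_norm, mul_div_assoc, norm_mul,
    Real.norm_of_nonneg (by positivity : 0 ≤ log (1 + u) / (1 + u))]
  refine mul_le_of_le_one_right (norm_nonneg _) ?_
  rw [div_le_one (by linarith)]
  linarith

theorem integral_log_mul_log_one_add_div_one_add :
    ∫ u in (0 : ℝ)..1, log u * log (1 + u) / (1 + u) =
      -(1 / 2) * ∫ u in (0 : ℝ)..1, log (1 + u) ^ 2 / u := by
  set F : ℝ → ℝ := fun u => log u * log (1 + u) ^ 2
  have hderiv : ∀ x ∈ Ioo (0 : ℝ) 1, HasDerivAt F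
      (log (1 + x) ^ 2 / x + 2 * (log x * log (1 + x) / (1 + x))) x := by
    intro x hx
    have hx1 : 1 + x ≠ 0 := by linarith [hx.1]
    refine ((Real.hasDerivAt_log hx.1.ne').mul
      ((((hasDerivAt_id' x).const_add 1).log hx1).pow 2)).congr_deriv ?_
    simp only [Pi.pow_apply]
    field_simp
    ring
  have hint_sq := intervalIntegrable_log_one_add_sq_div zero_le_one
  have hint_mul := (intervalIntegrable_log_mul_log_one_add_div_one_add zero_le_one).const_mul 2
  have hzero : Tendsto F (𝓝[>] 0) (𝓝 0) := by
    have hbound := (tendsto_pow_succ_mul_log_pow_nhdsGT_zero 1 1).norm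
    rw [norm_zero] at hbound
    refine squeeze_zero_norm' ?_ hbound
    filter_upwards [self_mem_nhdsWithin] with u (hu : 0 < u)
    have hlog0 : 0 ≤ log (1 + u) := Real.log_nonneg (by linarith)
    have hsq : log (1 + u) ^ 2 ≤ u ^ 2 :=
      pow_le_pow_left₀ hlog0 (log_one_add_le_self (by linarith)) 2
    simp only [F, norm_mul, norm_pow, Real.norm_of_nonneg hlog0, Real.norm_of_nonneg hu.le,
      pow_one]
    rw [mul_comm]
    exact mul_le_mul_of_nonneg_right hsq (norm_nonneg _)
  have hone : Tendsto F (𝓝[<] 1) (𝓝 0) := by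
    have : ContinuousAt F 1 := by fun_prop (disch := norm_num)
    simpa [F] using this.tendsto.mono_left nhdsWithin_le_nhds
  have hFTC := integral_eq_sub_of_hasDerivAt_of_tendsto zero_lt_one hderiv
    (hint_sq.add hint_mul) hzero hone
  rw [integral_add hint_sq hint_mul, intervalIntegral.integral_const_mul] at hFTC
  linarith

theorem integral_log_one_sub_sq_div_half :
    ∫ t in (0 : ℝ)..1 / 2, log (1 - t) ^ 2 / t =
      (∫ u in (0 : ℝ)..1, log (1 + u) ^ 2 / u) - log 2 ^ 3 / 3 := by
  have hsubst := integral_comp_div_one_add_mul_inv_sq zero_le_one fun t => log (1 - t) ^ 2 / t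
  have hlog2 := integral_log_one_add_sq_div_one_add zero_le_one
  norm_num at hsubst hlog2
  rw [← hsubst, ← hlog2, ← integral_sub (intervalIntegrable_log_one_add_sq_div zero_le_one)
    (continuousOn_log_one_add_sq_div_one_add.mono
      (by rw [uIcc_of_le zero_le_one]; exact Icc_subset_Ici_self)).intervalIntegrable]
  refine integral_congr_ae (Eventually.of_forall fun u hu => ?_)
  rw [uIoc_of_le zero_le_one] at hu
  have hu0 : u ≠ 0 := hu.1.ne'
  have hu1 : 1 + u ≠ 0 := by linarith [hu.1]
  rw [show 1 - u / (1 + u) = (1 + u)⁻¹ by field_simp; ring, Real.log_inv]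
  field_simp
  ring

theorem integral_log_sq_div_one_sub_half :
    ∫ t in (0 : ℝ)..1 / 2, log t ^ 2 / (1 - t) =
      3 / 2 * zetaR 3 + (∫ u in (0 : ℝ)..1, log (1 + u) ^ 2 / u) + log 2 ^ 3 / 3 := by
  have hsubst := integral_comp_div_one_add_mul_inv_sq zero_le_one fun t => log t ^ 2 / (1 - t)
  have hlog2 := integral_log_one_add_sq_div_one_add zero_le_one
  norm_num at hsubst hlog2
  have hint_sq : IntervalIntegrable (fun u => log u ^ 2 / (1 + u)) volume 0 1 := by
    simpa only [neg_one_mul, sub_neg_eq_add] using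
      (intervalIntegrable_and_hasSum_integral_log_sq_div_one_sub_mul (r := -1) (by simp)).1
  have hint_mul := (intervalIntegrable_log_mul_log_one_add_div_one_add zero_le_one).const_mul 2
  have hint_log2 : IntervalIntegrable (fun u => log (1 + u) ^ 2 / (1 + u)) volume 0 1 :=
    (continuousOn_log_one_add_sq_div_one_add.mono
      (by rw [uIcc_of_le zero_le_one]; exact Icc_subset_Ici_self)).intervalIntegrable
  have hexpand :
      ∫ u in (0 : ℝ)..1, log (u / (1 + u)) ^ 2 / (1 - u / (1 + u)) * ((1 + u) ^ 2)⁻¹ =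
      ∫ u in (0 : ℝ)..1, (log u ^ 2 / (1 + u) - 2 * (log u * log (1 + u) / (1 + u)) +
        log (1 + u) ^ 2 / (1 + u)) := by
    refine integral_congr_ae (Eventually.of_forall fun u hu => ?_)
    rw [uIoc_of_le zero_le_one] at hu
    have hu1 : 1 + u ≠ 0 := by linarith [hu.1]
    rw [show 1 - u / (1 + u) = (1 + u)⁻¹ by field_simp; ring, Real.log_div hu.1.ne' hu1]
    field_simp
    ring
  rw [← hsubst, hexpand, integral_add (hint_sq.sub hint_mul) hint_log2,
    integral_sub hint_sq hint_mul, intervalIntegral.integral_const_mul,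
    integral_log_sq_div_one_add, integral_log_mul_log_one_add_div_one_add, hlog2]
  ring

theorem integral_log_one_sub_sq_div_add_integral_log_sq_div_one_sub :
    (∫ t in (0 : ℝ)..1 / 2, log (1 - t) ^ 2 / t) +
      ∫ t in (0 : ℝ)..1 / 2, log t ^ 2 / (1 - t) = 2 * zetaR 3 := by
  have hint : IntervalIntegrable (fun t => log (1 - t) ^ 2 / t) volume 0 1 := by
    simpa using ((intervalIntegrable_and_hasSum_integral_log_sq_div_one_sub_mul (r := 1)
      (by simp)).1.comp_sub_left 1).symm
  have hreflect (a b : ℝ) : ∫ t in a..b, log (1 - t) ^ 2 / t =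
      ∫ u in 1 - b..1 - a, log u ^ 2 / (1 - u) := by
    simpa only [sub_sub_cancel] using
      integral_comp_sub_left (fun u => log u ^ 2 / (1 - u)) (1 : ℝ) (a := a) (b := b)
  have h1 := hreflect (1 / 2) 1
  have h2 := hreflect 0 1
  norm_num at h1 h2
  rw [← h1, integral_add_adjacent_intervals
    (hint.mono_set (by norm_num [uIcc_of_le, Icc_subset_Icc_iff]))
    (hint.mono_set (by norm_num [uIcc_of_le, Icc_subset_Icc_iff])), h2,
    integral_log_sq_div_one_sub]

theorem stmt_13 :
    (∑' n : ℕ, (1 / 2 : ℝ) ^ (n + 1) / ((n : ℝ) + 1) ^ 2 *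
        ∑ m ∈ Finset.Ico 1 (n + 1), 1 / (m : ℝ)) =
      1 / 8 * zetaR 3 - 1 / 6 * (Real.log 2) ^ 3 := by
  simp_rw [sum_Ico_one_div_eq_harmonic]
  rw [(hasSum_pow_div_sq_mul_harmonic (by norm_num) (by norm_num)).tsum_eq]
  have hP := integral_log_one_sub_sq_div_half
  have hQ := integral_log_sq_div_one_sub_half
  have hPQ := integral_log_one_sub_sq_div_add_integral_log_sq_div_one_sub
  linarith
end
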